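/- (Theorem 3, exponential decay case.) Let C = Φ(Σ1+Σ2)Φᵀ and w = Φ(μ1−μ2), and suppose w does not belong to the column space of C (this is equivalent to condition im(Φ(μ1−μ2)(μ1−μ2)ᵀΦᵀ) ⊄ im(Φ(Σ1+Σ2)Φᵀ)). Let v denote the orthogonal projection of w onto ker C (which equals the orthogonal complement of the column space of C since C is symmetric); then v ≠ 0 and lim_{σ² → 0+} σ² · log P̄_err(σ²) = −‖v‖²/4 < 0. In particular the Bhattacharyya upper bound decays exponentially in 1/σ² as σ² → 0. -/

import Mathlib

open Matrix MeasureTheory Filter Real Topology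

/-- Pseudo-determinant of a real square matrix: the product of the nonzero
eigenvalues when the matrix is Hermitian (symmetric), with the empty product
equal to 1; junk value 0 otherwise. -/
noncomputable def pdet {n : ℕ} (A : Matrix (Fin n) (Fin n) ℝ) : ℝ :=
  if h : A.IsHermitian then
    ∏ i ∈ Finset.univ.filter (fun i => h.eigenvalues i ≠ 0), h.eigenvalues i
  else 0

/-- Bhattacharyya exponent `K(σ²)` for the two-class compressive
classification problem, as a function of the noise level `s = σ²`. -/
noncomputable def Kb {M N : ℕ} (Φ : Matrix (Fin M) (Fin N) ℝ)
    (S1 S2 : Matrix (Fin N) (Fin N) ℝ) (μ1 μ2 : Fin N → ℝ) (s : ℝ) : ℝ :=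
  1/8 * ((Φ *ᵥ (μ1 - μ2)) ⬝ᵥ
      (((1/2 : ℝ) • (Φ * (S1 + S2) * Φᵀ + s • (1 : Matrix (Fin M) (Fin M) ℝ)))⁻¹
        *ᵥ (Φ *ᵥ (μ1 - μ2))))
  + 1/2 * Real.log
      (((1/2 : ℝ) • (Φ * (S1 + S2) * Φᵀ + s • (1 : Matrix (Fin M) (Fin M) ℝ))).det /
        Real.sqrt ((Φ * S1 * Φᵀ + s • (1 : Matrix (Fin M) (Fin M) ℝ)).det *
          (Φ * S2 * Φᵀ + s • (1 : Matrix (Fin M) (Fin M) ℝ)).det))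

/-- Bhattacharyya upper bound `P̄_err(σ²)` to the misclassification probability. -/
noncomputable def Perr {M N : ℕ} (Φ : Matrix (Fin M) (Fin N) ℝ)
    (S1 S2 : Matrix (Fin N) (Fin N) ℝ) (μ1 μ2 : Fin N → ℝ) (P1 P2 : ℝ) (s : ℝ) : ℝ :=
  Real.sqrt (P1 * P2) * Real.exp (-(Kb Φ S1 S2 μ1 μ2 s))


/-!
Write `C = Φ(Σ₁+Σ₂)Φᵀ`, `Cₖ = ΦΣₖΦᵀ` and `w = Φ(μ₁-μ₂)`. For `s = σ² > 0`,
`K(s) = ¼ wᵀ(C + s)⁻¹w + ½ (M log ½ + log det(C + s) - ½ log det(C₁ + s) - ½ log det(C₂ + s))`.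
Each `s log det(B + s) = ∑ᵢ s log(λᵢ + s)` tends to `0` for `B ⪰ 0`. For the quadratic term write
`w = v + Cz` with `Cv = 0`: then `(C + s)⁻¹v = v / s`, the cross terms vanish, and
`s wᵀ(C + s)⁻¹w = ‖v‖² + s (Cz)ᵀ(C + s)⁻¹(Cz)` where `0 ≤ (Cz)ᵀ(C + s)⁻¹(Cz) ≤ zᵀCz`.
Hence `s K(s) → ‖v‖²/4`, while `s log √(P₁P₂) → 0`.
-/

lemma tendsto_mul_const_nhdsGT_zero (c : ℝ) : Tendsto (fun s => s * c) (𝓝[>] 0) (𝓝 0) :=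
  tendsto_nhdsWithin_of_tendsto_nhds (by simpa using (continuous_mul_const c).tendsto 0)

lemma tendsto_mul_log_add_nhdsGT_zero {a : ℝ} (ha : 0 ≤ a) :
    Tendsto (fun s => s * log (a + s)) (𝓝[>] 0) (𝓝 0) := by
  apply tendsto_nhdsWithin_of_tendsto_nhds
  rcases ha.eq_or_lt with rfl | ha
  · simpa using continuous_mul_log.tendsto 0
  · have : ContinuousAt (fun s => s * log (a + s)) 0 :=
      continuousAt_id.mul ((continuousAt_const.add continuousAt_id).log (by simpa using ha.ne'))
    simpa using this.tendsto

namespace Matrix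

variable {m n : Type*} {A : Matrix n n ℝ} {s : ℝ}

lemma PosSemidef.isSymm (hA : A.PosSemidef) : A.IsSymm :=
  isHermitian_iff_isSymm.mp hA.isHermitian

lemma PosSemidef.posDef_add_smul_one [DecidableEq n] (hA : A.PosSemidef) (hs : 0 < s) :
    (A + s • 1).PosDef :=
  PosDef.posSemidef_add hA (PosDef.one.smul hs)

variable [Fintype n]

lemma PosSemidef.mul_mul_transpose_same [Fintype m] (hA : A.PosSemidef) (B : Matrix m n ℝ) :
    (B * A * Bᵀ).PosSemidef := by
  simpa using hA.mul_mul_conjTranspose_same B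

lemma IsSymm.mulVec_dotProduct {B : Matrix n n ℝ} (hB : B.IsSymm) (x y : n → ℝ) :
    (B *ᵥ x) ⬝ᵥ y = x ⬝ᵥ B *ᵥ y := by
  rw [dotProduct_comm, dotProduct_mulVec, ← mulVec_transpose, hB.eq, dotProduct_comm]

variable [DecidableEq n]

lemma IsHermitian.det_add_smul_one (hA : A.IsHermitian) (s : ℝ) :
    (A + s • 1).det = ∏ i, (hA.eigenvalues i + s) := by
  have h := A.eval_charpoly (-s)
  have hneg : scalar n (-s) - A = -(A + s • 1) := by
    rw [neg_add, scalar_apply, smul_one_eq_diagonal]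
    simp [sub_eq_neg_add]
  have hprod : ∏ i, (-s - hA.eigenvalues i) =
      (-1) ^ Fintype.card n * ∏ i, (hA.eigenvalues i + s) := by
    rw [← Finset.card_univ, ← Finset.prod_const, ← Finset.prod_mul_distrib]
    exact Finset.prod_congr rfl fun i _ => by ring
  simp only [hA.charpoly_eq, Polynomial.eval_prod, Polynomial.eval_sub, Polynomial.eval_X,
    Polynomial.eval_C, RCLike.ofReal_real_eq_id, id, hprod, hneg, det_neg] at h
  exact mul_left_cancel₀ (pow_ne_zero _ (by norm_num)) h.symm

namespace PosSemidef

lemma tendsto_mul_log_det_add_smul_one (hA : A.PosSemidef) :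
    Tendsto (fun s => s * log (A + s • 1).det) (𝓝[>] 0) (𝓝 0) := by
  have hlim : Tendsto (fun s => ∑ i, s * log (hA.isHermitian.eigenvalues i + s)) (𝓝[>] 0)
      (𝓝 (∑ _i : n, 0)) :=
    tendsto_finsetSum _ fun i _ => tendsto_mul_log_add_nhdsGT_zero (hA.eigenvalues_nonneg i)
  rw [Finset.sum_const_zero] at hlim
  refine hlim.congr' ?_
  filter_upwards [self_mem_nhdsWithin] with s (hs : 0 < s)
  have hpos i : 0 < hA.isHermitian.eigenvalues i + s := by linarith [hA.eigenvalues_nonneg i]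
  rw [hA.isHermitian.det_add_smul_one, log_prod fun i _ => (hpos i).ne', Finset.mul_sum]

lemma isUnit_det_add_smul_one (hA : A.PosSemidef) (hs : 0 < s) : IsUnit (A + s • 1).det :=
  (hA.posDef_add_smul_one hs).det_pos.ne'.isUnit

lemma add_smul_one_mulVec_inv_add_smul_one_mulVec (hA : A.PosSemidef) (hs : 0 < s)
    (x : n → ℝ) : (A + s • 1) *ᵥ ((A + s • 1)⁻¹ *ᵥ x) = x := by
  rw [mulVec_mulVec, mul_nonsing_inv _ (hA.isUnit_det_add_smul_one hs), one_mulVec]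

lemma inv_add_smul_one_mulVec_add_smul_one_mulVec (hA : A.PosSemidef) (hs : 0 < s)
    (x : n → ℝ) : (A + s • 1)⁻¹ *ᵥ ((A + s • 1) *ᵥ x) = x := by
  rw [mulVec_mulVec, nonsing_inv_mul _ (hA.isUnit_det_add_smul_one hs), one_mulVec]

lemma inv_add_smul_one_mulVec_of_mulVec_eq_zero (hA : A.PosSemidef) (hs : 0 < s) {v : n → ℝ}
    (hv : A *ᵥ v = 0) : (A + s • 1)⁻¹ *ᵥ v = s⁻¹ • v := by
  have h := hA.inv_add_smul_one_mulVec_add_smul_one_mulVec hs (s⁻¹ • v)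
  rwa [add_mulVec, mulVec_smul, hv, smul_zero, zero_add, smul_mulVec, one_mulVec, smul_smul,
    mul_inv_cancel₀ hs.ne', one_smul] at h

lemma inv_add_smul_one_mulVec_mulVec (hA : A.PosSemidef) (hs : 0 < s) (z : n → ℝ) :
    (A + s • 1)⁻¹ *ᵥ (A *ᵥ z) = z - s • (A + s • 1)⁻¹ *ᵥ z := by
  have h := hA.inv_add_smul_one_mulVec_add_smul_one_mulVec hs z
  rw [add_mulVec, smul_mulVec, one_mulVec, mulVec_add, mulVec_smul] at h
  rw [eq_sub_iff_add_eq, h]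

lemma mulVec_dotProduct_inv_add_smul_one_mulVec_nonneg (hA : A.PosSemidef) (hs : 0 < s)
    (z : n → ℝ) : 0 ≤ (A *ᵥ z) ⬝ᵥ (A + s • 1)⁻¹ *ᵥ z := by
  set y := (A + s • 1)⁻¹ *ᵥ z
  have hz : z = (A + s • 1) *ᵥ y := (hA.add_smul_one_mulVec_inv_add_smul_one_mulVec hs z).symm
  have hAy : 0 ≤ y ⬝ᵥ A *ᵥ y := by simpa using hA.dotProduct_mulVec_nonneg y
  have hAAy : 0 ≤ (A *ᵥ y) ⬝ᵥ (A *ᵥ y) := by simpa using dotProduct_self_star_nonneg (A *ᵥ y)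
  calc 0 ≤ (A *ᵥ y) ⬝ᵥ (A *ᵥ y) + s * (y ⬝ᵥ A *ᵥ y) := by positivity
    _ = (A *ᵥ z) ⬝ᵥ y := by
      rw [hA.isSymm.mulVec_dotProduct z y, hz, add_mulVec, smul_mulVec, one_mulVec, add_dotProduct,
        smul_dotProduct, smul_eq_mul]

lemma mulVec_dotProduct_inv_add_smul_one_mulVec_mulVec_le (hA : A.PosSemidef) (hs : 0 < s)
    (z : n → ℝ) : (A *ᵥ z) ⬝ᵥ (A + s • 1)⁻¹ *ᵥ (A *ᵥ z) ≤ z ⬝ᵥ A *ᵥ z := by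
  rw [hA.inv_add_smul_one_mulVec_mulVec hs, dotProduct_sub, dotProduct_smul, smul_eq_mul,
    hA.isSymm.mulVec_dotProduct z z]
  nlinarith [hA.mulVec_dotProduct_inv_add_smul_one_mulVec_nonneg hs z]

lemma mul_dotProduct_inv_add_smul_one_mulVec_add_mulVec (hA : A.PosSemidef) (hs : 0 < s)
    {v : n → ℝ} (hv : A *ᵥ v = 0) (z : n → ℝ) :
    s * ((v + A *ᵥ z) ⬝ᵥ (A + s • 1)⁻¹ *ᵥ (v + A *ᵥ z)) =
      v ⬝ᵥ v + s * ((A *ᵥ z) ⬝ᵥ (A + s • 1)⁻¹ *ᵥ (A *ᵥ z)) := by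
  have hRv := hA.inv_add_smul_one_mulVec_of_mulVec_eq_zero hs hv
  have hvz : v ⬝ᵥ A *ᵥ z = 0 := by rw [← hA.isSymm.mulVec_dotProduct, hv, zero_dotProduct]
  have hcross : v ⬝ᵥ (A + s • 1)⁻¹ *ᵥ (A *ᵥ z) = 0 := by
    rw [← (hA.posDef_add_smul_one hs).inv.posSemidef.isSymm.mulVec_dotProduct, hRv,
      smul_dotProduct, hvz, smul_zero]
  have hzv : (A *ᵥ z) ⬝ᵥ v = 0 := by rw [dotProduct_comm, hvz]
  rw [mulVec_add, hRv, add_dotProduct, dotProduct_add, dotProduct_add, hcross, dotProduct_smul,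
    dotProduct_smul, hzv, smul_eq_mul, smul_eq_mul]
  field_simp
  ring

theorem tendsto_mul_dotProduct_inv_add_smul_one_mulVec (hA : A.PosSemidef) {v x : n → ℝ}
    (hv : A *ᵥ v = 0) (hxv : x - v ∈ LinearMap.range A.mulVecLin) :
    Tendsto (fun s => s * (x ⬝ᵥ (A + s • 1)⁻¹ *ᵥ x)) (𝓝[>] 0) (𝓝 (v ⬝ᵥ v)) := by
  obtain ⟨z, hz⟩ := hxv
  obtain rfl : x = v + A *ᵥ z := by rw [← mulVecLin_apply, hz]; abel
  have hupper : Tendsto (fun s => v ⬝ᵥ v + s * (z ⬝ᵥ A *ᵥ z)) (𝓝[>] 0) (𝓝 (v ⬝ᵥ v)) := by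
    simpa using tendsto_const_nhds.add (tendsto_mul_const_nhdsGT_zero (z ⬝ᵥ A *ᵥ z))
  refine tendsto_of_tendsto_of_tendsto_of_le_of_le' tendsto_const_nhds hupper ?_ ?_ <;>
    filter_upwards [self_mem_nhdsWithin] with s (hs : 0 < s) <;>
    rw [hA.mul_dotProduct_inv_add_smul_one_mulVec_add_mulVec hs hv]
  · have := (hA.posDef_add_smul_one hs).inv.posSemidef.dotProduct_mulVec_nonneg (A *ᵥ z)
    simp only [star_trivial] at this
    nlinarith
  · nlinarith [hA.mulVec_dotProduct_inv_add_smul_one_mulVec_mulVec_le hs z]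

end PosSemidef

end Matrix

lemma Kb_eq {M N : ℕ} (Φ : Matrix (Fin M) (Fin N) ℝ) {S1 S2 : Matrix (Fin N) (Fin N) ℝ}
    (hS1 : S1.PosSemidef) (hS2 : S2.PosSemidef) (μ1 μ2 : Fin N → ℝ) {s : ℝ} (hs : 0 < s) :
    Kb Φ S1 S2 μ1 μ2 s =
      1/4 * ((Φ *ᵥ (μ1 - μ2)) ⬝ᵥ (Φ * (S1 + S2) * Φᵀ + s • 1)⁻¹ *ᵥ (Φ *ᵥ (μ1 - μ2)))
      + 1/2 * (M * log (1/2) + log (Φ * (S1 + S2) * Φᵀ + s • 1).det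
        - (log (Φ * S1 * Φᵀ + s • 1).det + log (Φ * S2 * Φᵀ + s • 1).det) / 2) := by
  have hC := ((hS1.add hS2).mul_mul_transpose_same Φ).posDef_add_smul_one hs
  have hC1 := (hS1.mul_mul_transpose_same Φ).posDef_add_smul_one hs
  have hC2 := (hS2.mul_mul_transpose_same Φ).posDef_add_smul_one hs
  have hinv : ((1/2 : ℝ) • (Φ * (S1 + S2) * Φᵀ + s • 1))⁻¹ =
      (2 : ℝ) • (Φ * (S1 + S2) * Φᵀ + s • 1)⁻¹ :=
    inv_eq_left_inv (by rw [smul_mul_smul_comm, nonsing_inv_mul _ hC.det_pos.ne'.isUnit]; norm_num)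
  have hdet : ((1/2 : ℝ) • (Φ * (S1 + S2) * Φᵀ + s • 1)).det =
      (1/2) ^ M * (Φ * (S1 + S2) * Φᵀ + s • 1).det := by
    rw [det_smul, Fintype.card_fin]
  have hprod := mul_pos hC1.det_pos hC2.det_pos
  rw [Kb, hinv, hdet, smul_mulVec, dotProduct_smul, smul_eq_mul,
    log_div (mul_pos (by positivity) hC.det_pos).ne' (sqrt_pos.mpr hprod).ne', log_sqrt hprod.le,
    log_mul (by positivity) hC.det_pos.ne', log_pow, log_mul hC1.det_pos.ne' hC2.det_pos.ne']
  ring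

lemma tendsto_mul_Kb {M N : ℕ} (Φ : Matrix (Fin M) (Fin N) ℝ) {S1 S2 : Matrix (Fin N) (Fin N) ℝ}
    (hS1 : S1.PosSemidef) (hS2 : S2.PosSemidef) {μ1 μ2 : Fin N → ℝ} {v : Fin M → ℝ}
    (hv1 : (Φ * (S1 + S2) * Φᵀ) *ᵥ v = 0)
    (hv2 : Φ *ᵥ (μ1 - μ2) - v ∈ LinearMap.range (Φ * (S1 + S2) * Φᵀ).mulVecLin) :
    Tendsto (fun s => s * Kb Φ S1 S2 μ1 μ2 s) (𝓝[>] 0) (𝓝 (v ⬝ᵥ v / 4)) := by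
  have hC := (hS1.add hS2).mul_mul_transpose_same Φ
  have hquad := hC.tendsto_mul_dotProduct_inv_add_smul_one_mulVec hv1 hv2
  have hlogdet := ((tendsto_mul_const_nhdsGT_zero (M * log (1/2))).add
    hC.tendsto_mul_log_det_add_smul_one).sub
    (((hS1.mul_mul_transpose_same Φ).tendsto_mul_log_det_add_smul_one.add
      (hS2.mul_mul_transpose_same Φ).tendsto_mul_log_det_add_smul_one).div_const 2)
  have hlim := (hquad.const_mul (1/4)).add (hlogdet.const_mul (1/2))
  rw [show v ⬝ᵥ v / 4 = 1/4 * (v ⬝ᵥ v) + 1/2 * (0 + 0 - (0 + 0) / 2) by ring]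
  refine hlim.congr' ?_
  filter_upwards [self_mem_nhdsWithin] with s (hs : 0 < s)
  rw [Kb_eq Φ hS1 hS2 μ1 μ2 hs]
  ring

theorem theorem3_exponential_decay_general (M N : ℕ)
    (Φ : Matrix (Fin M) (Fin N) ℝ) (S1 S2 : Matrix (Fin N) (Fin N) ℝ)
    (hS1 : S1.PosSemidef) (hS2 : S2.PosSemidef) (μ1 μ2 : Fin N → ℝ)
    (P1 P2 : ℝ) (hP1 : 0 < P1) (hP2 : 0 < P2)
    (hw : Φ *ᵥ (μ1 - μ2) ∉ LinearMap.range (Φ * (S1 + S2) * Φᵀ).mulVecLin)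
    (v : Fin M → ℝ)
    (hv1 : (Φ * (S1 + S2) * Φᵀ) *ᵥ v = 0)
    (hv2 : Φ *ᵥ (μ1 - μ2) - v ∈ LinearMap.range (Φ * (S1 + S2) * Φᵀ).mulVecLin) :
    v ≠ 0 ∧ -(v ⬝ᵥ v) / 4 < 0 ∧
    Filter.Tendsto (fun s : ℝ => s * Real.log (Perr Φ S1 S2 μ1 μ2 P1 P2 s)) (𝓝[>] 0)
      (𝓝 (-(v ⬝ᵥ v) / 4)) := by
  have hv : v ≠ 0 := by
    rintro rfl
    exact hw (by simpa using hv2)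
  have hvv : 0 < v ⬝ᵥ v := by simpa using dotProduct_self_star_pos_iff.mpr hv
  refine ⟨hv, by linarith, ?_⟩
  have hsqrt : sqrt (P1 * P2) ≠ 0 := (sqrt_pos.mpr (mul_pos hP1 hP2)).ne'
  have hlog : ∀ s, s * log (Perr Φ S1 S2 μ1 μ2 P1 P2 s) =
      s * log (sqrt (P1 * P2)) - s * Kb Φ S1 S2 μ1 μ2 s := fun s => by
    rw [Perr, log_mul hsqrt (exp_ne_zero _), log_exp]
    ring
  rw [funext hlog, neg_div, ← zero_sub]
  exact (tendsto_mul_const_nhdsGT_zero _).sub (tendsto_mul_Kb Φ hS1 hS2 hv1 hv2)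

/-- Theorem 3, exponential-decay case: let `C = Φ(Σ1+Σ2)Φᵀ` and
`w = Φ(μ1-μ2)`. If `w` is not in the column space of `C`, and `v` is the
orthogonal projection of `w` onto `ker C` (characterized by `C v = 0` and
`w - v ∈ im C`, since `(ker C)ᗮ = im C` for symmetric `C`), then `v ≠ 0` and
`lim_{σ²→0⁺} σ² log P̄_err(σ²) = -‖v‖²/4 < 0`; in particular the bound decays
exponentially in `1/σ²`. -/
theorem theorem3_exponential_decay (M N : ℕ) (hM : 0 < M) (hN : 0 < N)
    (Φ : Matrix (Fin M) (Fin N) ℝ) (S1 S2 : Matrix (Fin N) (Fin N) ℝ)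
    (hS1 : S1.PosSemidef) (hS2 : S2.PosSemidef) (μ1 μ2 : Fin N → ℝ)
    (P1 P2 : ℝ) (hP1 : 0 < P1) (hP2 : 0 < P2) (hP : P1 + P2 = 1)
    (hw : Φ *ᵥ (μ1 - μ2) ∉ LinearMap.range (Φ * (S1 + S2) * Φᵀ).mulVecLin)
    (v : Fin M → ℝ)
    (hv1 : (Φ * (S1 + S2) * Φᵀ) *ᵥ v = 0)
    (hv2 : Φ *ᵥ (μ1 - μ2) - v ∈ LinearMap.range (Φ * (S1 + S2) * Φᵀ).mulVecLin) :
    v ≠ 0 ∧ -(v ⬝ᵥ v) / 4 < 0 ∧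
    Filter.Tendsto (fun s : ℝ => s * Real.log (Perr Φ S1 S2 μ1 μ2 P1 P2 s)) (𝓝[>] 0)
      (𝓝 (-(v ⬝ᵥ v) / 4)) :=
  theorem3_exponential_decay_general M N Φ S1 S2 hS1 hS2 μ1 μ2 P1 P2 hP1 hP2 hw v hv1 hv2
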